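/- Let d, K ≥ 1 and H > 0, let W be a nonempty compact convex subset of [0, H]^d ⊆ ℝ^d, and let v̂¹, …, v̂^K ∈ [0, H]^d. Let B̄ denote the closed unit ball of ℝ^d, let θ¹ ∈ B̄, and for each k let x^k ∈ W attain max_{x ∈ W} ⟪θ^k, x⟫ and set θ^{k+1} = Π_{B̄}( θ^k + η_k (v̂^k − x^k) ) with η_k = 1/(√d · H · √k). Then dist( (1/K) ∑_{k=1}^{K} v̂^k, W ) ≤ (1/K) ∑_{k=1}^{K} ( ⟪θ^k, v̂^k⟫ − max_{x ∈ W} ⟪θ^k, x⟫ ) + 6 √d H / √K. -/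

import Mathlib

/-!
Let `v̄` be the average of the `v̂^k` and `p` its nearest point in `W`. The unit vector
`u = (v̄ - p)/‖v̄ - p‖` puts `W` in the half-space `⟪u, · - p⟫ ≤ 0`, so
`dist(v̄, W) ≤ ⟪u, v̄ - x^k⟫` for every `k`, and averaging gives
`dist(v̄, W) ≤ (1/K) ∑ ⟪u, g^k⟫` with `g^k = v̂^k - x^k`. Writing
`⟪u, g^k⟫ = ⟪θ^k, g^k⟫ + ⟪g^k, u - θ^k⟫`, the first term is the linearized loss (since `x^k`
maximizes `⟪θ^k, ·⟫` over `W`) and the second sum is the regret of projected gradient ascent on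
the unit ball against `u`. The gradients are bounded by `G = √d H` because everything lives in
`[0,H]^d`, and with steps `1/(G√k)` the telescoping of `‖θ^k - u‖²` bounds that regret by `3G√K`.
-/

/-- The metric projection onto the closed unit ball of Euclidean space:
it is the identity inside the ball and radial normalization outside. -/
noncomputable def projBall {d : ℕ} (y : EuclideanSpace ℝ (Fin d)) :
    EuclideanSpace ℝ (Fin d) :=
  if ‖y‖ ≤ 1 then y else ‖y‖⁻¹ • y

open Finset
open scoped RealInnerProductSpace

section Duality

variable {E : Type*} [NormedAddCommGroup E] [InnerProductSpace ℝ E]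

theorem exists_norm_le_one_forall_infDist_le_inner {W : Set E} (hne : W.Nonempty)
    (hcomp : IsCompact W) (hconv : Convex ℝ W) (y : E) :
    ∃ u : E, ‖u‖ ≤ 1 ∧ ∀ w ∈ W, Metric.infDist y W ≤ ⟪u, y - w⟫ := by
  obtain ⟨p, hpW, hp⟩ := hcomp.exists_infDist_eq_dist hne y
  have hp_norm : Metric.infDist y W = ‖y - p‖ := by rw [hp, dist_eq_norm]
  have hobtuse : ∀ w ∈ W, ⟪y - p, w - p⟫ ≤ 0 := by
    have : Nonempty W := hne.to_subtype
    refine (norm_eq_iInf_iff_real_inner_le_zero hconv hpW).mp ?_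
    simp only [← hp_norm, Metric.infDist_eq_iInf, dist_eq_norm]
  refine ⟨‖y - p‖⁻¹ • (y - p), ?_, fun w hw => ?_⟩
  · rw [norm_smul, norm_inv, norm_norm]
    exact inv_mul_le_one_of_le₀ le_rfl (norm_nonneg _)
  · have hsplit : y - w = (y - p) - (w - p) := by abel
    rw [hsplit, inner_sub_right, real_inner_smul_left, real_inner_smul_left,
      real_inner_self_eq_norm_sq, hp_norm]
    have hinv : 0 ≤ ‖y - p‖⁻¹ := inv_nonneg.mpr (norm_nonneg _)
    have hnorm : ‖y - p‖⁻¹ * ‖y - p‖ ^ 2 = ‖y - p‖ := by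
      rcases (norm_nonneg (y - p)).eq_or_lt with h | h
      · rw [← h]; simp
      · field_simp
    nlinarith [mul_nonpos_of_nonneg_of_nonpos hinv (hobtuse w hw)]

theorem exists_norm_le_one_infDist_average_le {W : Set E} (hne : W.Nonempty)
    (hcomp : IsCompact W) (hconv : Convex ℝ W) {ι : Type*} {s : Finset ι} (hs : s.Nonempty)
    (v : ι → E) {x : ι → E} (hx : ∀ i ∈ s, x i ∈ W) :
    ∃ u : E, ‖u‖ ≤ 1 ∧ Metric.infDist ((#s : ℝ)⁻¹ • ∑ i ∈ s, v i) W
      ≤ (#s : ℝ)⁻¹ * ∑ i ∈ s, ⟪u, v i - x i⟫ := by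
  set y := (#s : ℝ)⁻¹ • ∑ i ∈ s, v i
  obtain ⟨u, hu, hdist⟩ := exists_norm_le_one_forall_infDist_le_inner hne hcomp hconv y
  have hcard : (0 : ℝ) < #s := by exact_mod_cast hs.card_pos
  have hsum : ∑ i ∈ s, (y - x i) = ∑ i ∈ s, (v i - x i) := by
    rw [sum_sub_distrib, sum_sub_distrib, sum_const, ← Nat.cast_smul_eq_nsmul ℝ, smul_inv_smul₀
      hcard.ne']
  refine ⟨u, hu, (le_inv_mul_iff₀ hcard).mpr ?_⟩
  calc (#s : ℝ) * Metric.infDist y W = ∑ i ∈ s, Metric.infDist y W := by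
        rw [sum_const, nsmul_eq_mul]
    _ ≤ ∑ i ∈ s, ⟪u, y - x i⟫ := sum_le_sum fun i hi => hdist (x i) (hx i hi)
    _ = ∑ i ∈ s, ⟪u, v i - x i⟫ := by rw [← inner_sum, hsum, inner_sum]

end Duality

theorem EuclideanSpace.norm_sub_le_sqrt_card_mul {ι : Type*} [Fintype ι] {H : ℝ} (hH : 0 ≤ H)
    {v w : EuclideanSpace ℝ ι} (hv : ∀ j, v j ∈ Set.Icc 0 H) (hw : ∀ j, w j ∈ Set.Icc 0 H) :
    ‖v - w‖ ≤ √(Fintype.card ι) * H := by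
  have hcoord : ∀ j, ‖(v - w) j‖ ^ 2 ≤ H ^ 2 := fun j => by
    rw [PiLp.sub_apply, Real.norm_eq_abs, sq_abs]
    nlinarith [Set.mem_Icc.mp (hv j), Set.mem_Icc.mp (hw j)]
  calc ‖v - w‖ = √(∑ j, ‖(v - w) j‖ ^ 2) := EuclideanSpace.norm_eq _
    _ ≤ √(∑ _j : ι, H ^ 2) := Real.sqrt_le_sqrt (sum_le_sum fun j _ => hcoord j)
    _ = √(Fintype.card ι) * H := by
      rw [sum_const, card_univ, nsmul_eq_mul, Real.sqrt_mul (Nat.cast_nonneg _), Real.sqrt_sq hH]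

theorem sum_Icc_inv_sqrt_le (K : ℕ) : ∑ k ∈ Icc 1 K, (√k)⁻¹ ≤ 2 * √K := by
  induction K with
  | zero => simp
  | succ n ih =>
    rw [sum_Icc_succ_top (Nat.le_add_left 1 n), Nat.cast_succ]
    have hpos : 0 < √((n : ℝ) + 1) := Real.sqrt_pos.mpr (by positivity)
    have hsq : √((n : ℝ) + 1) ^ 2 = n + 1 := Real.sq_sqrt (by positivity)
    have hsq' : √(n : ℝ) ^ 2 = n := Real.sq_sqrt (Nat.cast_nonneg n)
    -- `1/√(n+1) ≤ 2(√(n+1) - √n)` is `(√(n+1) - √n)^2 ≥ 0` after clearing the denominator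
    have hstep : (√((n : ℝ) + 1))⁻¹ ≤ 2 * √((n : ℝ) + 1) - 2 * √(n : ℝ) := by
      rw [inv_eq_one_div, div_le_iff₀ hpos]
      nlinarith [sq_nonneg (√((n : ℝ) + 1) - √(n : ℝ))]
    linarith

theorem sum_Icc_sub_succ_mul_le {a c : ℕ → ℝ} {B : ℝ} (K : ℕ)
    (ha : ∀ k ∈ Icc 1 (K + 1), a k ∈ Set.Icc 0 B) (hc : Monotone c) (hc0 : 0 ≤ c 0) :
    ∑ k ∈ Icc 1 K, (a k - a (k + 1)) * c k ≤ B * c K := by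
  have hcK : 0 ≤ c K := hc0.trans (hc K.zero_le)
  suffices h : ∀ m ≤ K, ∑ k ∈ Icc 1 m, (a k - a (k + 1)) * c k ≤ (B - a (m + 1)) * c m by
    have := (ha (K + 1) (mem_Icc.mpr ⟨by omega, le_rfl⟩)).1
    nlinarith [h K le_rfl]
  intro m hm
  induction m with
  | zero =>
    rw [Icc_eq_empty_of_lt zero_lt_one, sum_empty]
    exact mul_nonneg (sub_nonneg.mpr (ha 1 (mem_Icc.mpr ⟨le_rfl, by omega⟩)).2) hc0
  | succ m ih =>
    rw [sum_Icc_succ_top (Nat.le_add_left 1 m)]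
    have hB : a (m + 1) ≤ B := (ha (m + 1) (mem_Icc.mpr ⟨by omega, by omega⟩)).2
    have hmono : c m ≤ c (m + 1) := hc m.le_succ
    nlinarith [ih (by omega)]

section ProjectedGradient

variable {d : ℕ}

theorem norm_projBall_le_one (y : EuclideanSpace ℝ (Fin d)) : ‖projBall y‖ ≤ 1 := by
  unfold projBall
  split_ifs with h
  · exact h
  · rw [norm_smul, norm_inv, norm_norm]
    exact inv_mul_le_one_of_le₀ le_rfl (norm_nonneg _)

theorem norm_projBall_sub_le {u : EuclideanSpace ℝ (Fin d)} (hu : ‖u‖ ≤ 1)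
    (y : EuclideanSpace ℝ (Fin d)) : ‖projBall y - u‖ ≤ ‖y - u‖ := by
  unfold projBall
  split_ifs with h
  · exact le_rfl
  rw [not_le] at h
  have hy : 0 < ‖y‖ := one_pos.trans h
  have hinner : ⟪y, u⟫ ≤ ‖y‖ := (real_inner_le_norm y u).trans (mul_le_of_le_one_right hy.le hu)
  have hinv : ‖y‖⁻¹ ≤ 1 := inv_le_one_of_one_le₀ h.le
  refine pow_le_pow_iff_left₀ (norm_nonneg _) (norm_nonneg _) two_ne_zero |>.mp ?_
  rw [norm_sub_sq_real, norm_sub_sq_real, real_inner_smul_left, norm_smul, norm_inv, norm_norm,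
    inv_mul_cancel₀ hy.ne']
  nlinarith [mul_le_mul_of_nonneg_right hinner (sub_nonneg.mpr hinv), mul_inv_cancel₀ hy.ne',
    sq_nonneg (‖y‖ - 1)]

theorem norm_projBall_add_smul_sub_sq_le {u : EuclideanSpace ℝ (Fin d)} (hu : ‖u‖ ≤ 1)
    (θ g : EuclideanSpace ℝ (Fin d)) (η : ℝ) :
    ‖projBall (θ + η • g) - u‖ ^ 2 ≤ ‖θ - u‖ ^ 2 - 2 * η * ⟪g, u - θ⟫ + η ^ 2 * ‖g‖ ^ 2 := by
  have hexpand : ‖θ + η • g - u‖ ^ 2 = ‖θ - u‖ ^ 2 - 2 * η * ⟪g, u - θ⟫ + η ^ 2 * ‖g‖ ^ 2 := by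
    rw [show θ + η • g - u = (θ - u) + η • g by abel, norm_add_sq_real, real_inner_smul_right,
      norm_smul, Real.norm_eq_abs, mul_pow, sq_abs, real_inner_comm, ← neg_sub u θ,
      inner_neg_right, norm_neg]
    ring
  rw [← hexpand]
  exact pow_le_pow_left₀ (norm_nonneg _) (norm_projBall_sub_le hu _) 2

theorem sum_inner_sub_le_of_projBall_update {G : ℝ} (hG : 0 < G) (K : ℕ)
    {θ g : ℕ → EuclideanSpace ℝ (Fin d)} (hθ1 : ‖θ 1‖ ≤ 1)
    (hg : ∀ k ∈ Icc 1 K, ‖g k‖ ≤ G)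
    (hupd : ∀ k ∈ Icc 1 K, θ (k + 1) = projBall (θ k + (G * √k)⁻¹ • g k))
    {u : EuclideanSpace ℝ (Fin d)} (hu : ‖u‖ ≤ 1) :
    ∑ k ∈ Icc 1 K, ⟪g k, u - θ k⟫ ≤ 3 * G * √K := by
  set a : ℕ → ℝ := fun k => ‖θ k - u‖ ^ 2
  have hball : ∀ k ∈ Icc 1 (K + 1), ‖θ k‖ ≤ 1 := by
    intro k hk
    obtain ⟨hk1, hkK⟩ := mem_Icc.mp hk
    obtain ⟨j, rfl⟩ : ∃ j, k = j + 1 := ⟨k - 1, by omega⟩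
    rcases j.eq_zero_or_pos with rfl | hj
    · exact hθ1
    · rw [hupd j (mem_Icc.mpr ⟨hj, by omega⟩)]
      exact norm_projBall_le_one _
  have ha : ∀ k ∈ Icc 1 (K + 1), a k ∈ Set.Icc 0 (2 ^ 2) := fun k hk =>
    ⟨sq_nonneg _, pow_le_pow_left₀ (norm_nonneg _)
      ((norm_sub_le _ _).trans (by linarith [hball k hk])) 2⟩
  have hstep : ∀ k ∈ Icc 1 K,
      ⟪g k, u - θ k⟫ ≤ (a k - a (k + 1)) * (G * √k / 2) + G / 2 * (√k)⁻¹ := by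
    intro k hk
    have hs : 0 < √(k : ℝ) := Real.sqrt_pos.mpr (by exact_mod_cast (mem_Icc.mp hk).1)
    set η := (G * √k)⁻¹
    have hc : 0 < G * √k := by positivity
    have hηc : η * (G * √k) = 1 := inv_mul_cancel₀ hc.ne'
    have hdesc := norm_projBall_add_smul_sub_sq_le hu (θ k) (g k) η
    rw [← hupd k hk] at hdesc
    have hg2 : η ^ 2 * ‖g k‖ ^ 2 ≤ η ^ 2 * G ^ 2 :=
      mul_le_mul_of_nonneg_left (pow_le_pow_left₀ (norm_nonneg _) (hg k hk) 2) (sq_nonneg η)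
    have hdesc' : 2 * η * ⟪g k, u - θ k⟫ ≤ a k - a (k + 1) + η ^ 2 * G ^ 2 := by
      simp only [a]; linarith
    have hscaled := mul_le_mul_of_nonneg_right hdesc' (by positivity : 0 ≤ G * √k / 2)
    have hGs : G / 2 * (√k)⁻¹ = η ^ 2 * G ^ 2 * (G * √k / 2) := by
      simp only [η]; field_simp
    rw [hGs]
    linear_combination hscaled - ⟪g k, u - θ k⟫ * hηc
  calc ∑ k ∈ Icc 1 K, ⟪g k, u - θ k⟫
      ≤ ∑ k ∈ Icc 1 K, ((a k - a (k + 1)) * (G * √k / 2) + G / 2 * (√k)⁻¹) := sum_le_sum hstep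
    _ = ∑ k ∈ Icc 1 K, (a k - a (k + 1)) * (G * √k / 2) + G / 2 * ∑ k ∈ Icc 1 K, (√k)⁻¹ := by
      rw [sum_add_distrib, mul_sum]
    _ ≤ 2 ^ 2 * (G * √K / 2) + G / 2 * (2 * √K) := by
      gcongr
      · exact sum_Icc_sub_succ_mul_le K ha (fun m n hmn => by gcongr) (by simp)
      · exact sum_Icc_inv_sqrt_le K
    _ = 3 * G * √K := by ring

end ProjectedGradient

/-- Deterministic core of the projection-free (OCO-based) dual update
guarantee: the distance of the average of the `v̂^k` to the compact convex
target set `W ⊆ [0,H]^d` is controlled by the average linearized losses plus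
the online subgradient regret term `6√d H/√K`. -/
theorem stmt_11 (d K : ℕ) (hd : 1 ≤ d) (hK : 1 ≤ K) (H : ℝ) (hH : 0 < H)
    (W : Set (EuclideanSpace ℝ (Fin d)))
    (hne : W.Nonempty) (hcomp : IsCompact W) (hconv : Convex ℝ W)
    (hWbox : ∀ w ∈ W, ∀ j : Fin d, w j ∈ Set.Icc (0 : ℝ) H)
    (v : ℕ → EuclideanSpace ℝ (Fin d))
    (hv : ∀ k ∈ Finset.Icc 1 K, ∀ j : Fin d, v k j ∈ Set.Icc (0 : ℝ) H)
    (θ : ℕ → EuclideanSpace ℝ (Fin d)) (hθ1 : ‖θ 1‖ ≤ 1)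
    (x : ℕ → EuclideanSpace ℝ (Fin d))
    (hx : ∀ k ∈ Finset.Icc 1 K, x k ∈ W ∧
      IsGreatest ((fun w => (inner ℝ (θ k) w : ℝ)) '' W) (inner ℝ (θ k) (x k)))
    (hupd : ∀ k ∈ Finset.Icc 1 K,
      θ (k + 1) = projBall (θ k + (Real.sqrt d * H * Real.sqrt k)⁻¹ • (v k - x k))) :
    Metric.infDist ((K : ℝ)⁻¹ • ∑ k ∈ Finset.Icc 1 K, v k) W
      ≤ (K : ℝ)⁻¹ * ∑ k ∈ Finset.Icc 1 K,
          ((inner ℝ (θ k) (v k) : ℝ) - sSup ((fun w => (inner ℝ (θ k) w : ℝ)) '' W))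
        + 6 * Real.sqrt d * H / Real.sqrt K := by
  have hG : 0 < √d * H := mul_pos (Real.sqrt_pos.mpr (by exact_mod_cast hd)) hH
  obtain ⟨u, hu, hdist⟩ := exists_norm_le_one_infDist_average_le hne hcomp hconv
    (nonempty_Icc.mpr hK) v fun k hk => (hx k hk).1
  rw [Nat.card_Icc, add_tsub_cancel_right] at hdist
  have hgrad : ∀ k ∈ Icc 1 K, ‖v k - x k‖ ≤ √d * H := fun k hk => by
    simpa using EuclideanSpace.norm_sub_le_sqrt_card_mul hH.le (hv k hk) (hWbox _ (hx k hk).1)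
  have hregret := sum_inner_sub_le_of_projBall_update hG K hθ1 hgrad hupd hu
  have hgap : ∀ k ∈ Icc 1 K, ⟪u, v k - x k⟫ =
      (⟪θ k, v k⟫ - sSup ((fun w => ⟪θ k, w⟫) '' W)) + ⟪v k - x k, u - θ k⟫ := fun k hk => by
    rw [(hx k hk).2.csSup_eq, real_inner_comm, inner_sub_right, inner_sub_left, inner_sub_left,
      real_inner_comm (θ k), real_inner_comm (θ k)]
    ring
  have hK0 : (0 : ℝ) < K := by exact_mod_cast hK
  calc Metric.infDist ((K : ℝ)⁻¹ • ∑ k ∈ Icc 1 K, v k) W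
      ≤ (K : ℝ)⁻¹ * ∑ k ∈ Icc 1 K, ⟪u, v k - x k⟫ := hdist
    _ ≤ (K : ℝ)⁻¹ * (∑ k ∈ Icc 1 K, (⟪θ k, v k⟫ - sSup ((fun w => ⟪θ k, w⟫) '' W))
          + 3 * (√d * H) * √K) := by
      rw [sum_congr rfl hgap, sum_add_distrib]
      gcongr
    _ = (K : ℝ)⁻¹ * ∑ k ∈ Icc 1 K, (⟪θ k, v k⟫ - sSup ((fun w => ⟪θ k, w⟫) '' W))
          + 3 * √d * H / √K := by
      have hsK : √(K : ℝ) ^ 2 = K := Real.sq_sqrt hK0.le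
      field_simp
      linear_combination 3 * √d * H * hsK
    _ ≤ _ := by gcongr; norm_num
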